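/- Let β > 1 and let σ be a fixed nonnegative integer. Then, as the integer K → ∞ (with K > σ), π_{β,K}({K−σ, K−σ+1, …, K}) = (∑_{ℓ=K−σ}^{K} (βK)^ℓ / ℓ!) / (∑_{k=0}^{K} (βK)^k / k!) converges to 1 − β^{−(σ+1)}. -/

import Mathlib

/-!
Divide numerator and denominator by the top term `(βK)^K / K!`. The term of index `K - j` then
becomes `K.descFactorial j / (βK)^j`, which tends to `β⁻¹ ^ j` as `K → ∞` and is bounded by
`β⁻¹ ^ j` for every `K`. So the numerator tends to `∑_{j ≤ σ} β⁻¹ ^ j` and, by dominated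
convergence for series (Tannery's theorem), the denominator tends to `∑_j β⁻¹ ^ j = (1 - β⁻¹)⁻¹`;
their ratio is `1 - β⁻¹ ^ (σ + 1)`.
-/

open Filter Finset Polynomial Topology Nat

section Algebra

variable {𝕜 : Type*} [Field 𝕜] [CharZero 𝕜]

theorem pow_sub_div_factorial_sub {x : 𝕜} (hx : x ≠ 0) {K j : ℕ} (hj : j ≤ K) :
    x ^ (K - j) / (K - j)! = x ^ K / K ! * (K.descFactorial j / x ^ j) := by
  have hfac := Nat.factorial_mul_descFactorial hj
  have hpow : x ^ (K - j) * x ^ j = x ^ K := by rw [← pow_add, Nat.sub_add_cancel hj]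
  have hdesc : (K.descFactorial j : 𝕜) ≠ 0 := by exact_mod_cast (Nat.descFactorial_pos.2 hj).ne'
  rw [← hfac, ← hpow]
  push_cast
  field_simp

theorem sum_Icc_pow_div_factorial {x : 𝕜} (hx : x ≠ 0) {K σ : ℕ} (hσ : σ ≤ K) :
    ∑ ℓ ∈ Icc (K - σ) K, x ^ ℓ / ℓ ! =
      x ^ K / K ! * ∑ j ∈ range (σ + 1), K.descFactorial j / x ^ j := by
  rw [mul_sum, ← Ico_add_one_right_eq_Icc, sum_Ico_eq_sum_range, ← sum_range_reflect]
  refine sum_congr (by congr 1; omega) fun j hj => ?_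
  have hj : j ≤ σ := Nat.lt_succ_iff.mp (mem_range.mp hj)
  rw [← pow_sub_div_factorial_sub hx (hj.trans hσ)]
  congr 3 <;> omega

theorem sum_range_pow_div_factorial [TopologicalSpace 𝕜] {x : 𝕜} (hx : x ≠ 0) (K : ℕ) :
    ∑ k ∈ range (K + 1), x ^ k / k ! = x ^ K / K ! * ∑' j, K.descFactorial j / x ^ j := by
  have hvanish : ∀ j ∉ range (K + 1), (K.descFactorial j : 𝕜) / x ^ j = 0 := fun j hj => by
    rw [Nat.descFactorial_eq_zero_iff_lt.2 (by simpa using hj), Nat.cast_zero, zero_div]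
  rw [tsum_eq_sum hvanish, ← sum_Icc_pow_div_factorial hx le_rfl, Nat.sub_self,
    ← Ico_add_one_right_eq_Icc, range_eq_Ico]

end Algebra

theorem tendsto_descFactorial_div_pow (j : ℕ) :
    Tendsto (fun K : ℕ => (K.descFactorial j : ℝ) / (K : ℝ) ^ j) atTop (𝓝 1) := by
  have hdeg : (descPochhammer ℝ j).degree = (X ^ j : ℝ[X]).degree := by
    rw [degree_X_pow, degree_eq_natDegree (monic_descPochhammer ℝ j).ne_zero,
      descPochhammer_natDegree]
  have h := (div_tendsto_atTop_leadingCoeff_div_of_degree_eq _ _ hdeg).comp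
    tendsto_natCast_atTop_atTop
  simpa [Function.comp_def, descPochhammer_eval_eq_descFactorial,
    (monic_descPochhammer ℝ j).leadingCoeff] using h

theorem tendsto_descFactorial_div_mul_pow (c : ℝ) (j : ℕ) :
    Tendsto (fun K : ℕ => (K.descFactorial j : ℝ) / (c * K) ^ j) atTop (𝓝 (c⁻¹ ^ j)) := by
  simpa [mul_pow, div_mul_eq_div_div_swap, inv_pow] using
    (tendsto_descFactorial_div_pow j).div_const (c ^ j)

theorem descFactorial_div_mul_pow_le {c : ℝ} (hc : 0 ≤ c) (K j : ℕ) :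
    (K.descFactorial j : ℝ) / (c * K) ^ j ≤ c⁻¹ ^ j := by
  calc (K.descFactorial j : ℝ) / (c * K) ^ j ≤ (K : ℝ) ^ j / (c * K) ^ j := by
        gcongr
        exact_mod_cast Nat.descFactorial_le_pow K j
    _ = (K / (c * K)) ^ j := (div_pow _ _ _).symm
    _ ≤ c⁻¹ ^ j := by
        gcongr
        rw [div_mul_eq_div_div_swap, div_eq_mul_inv _ c]
        exact mul_le_of_le_one_left (inv_nonneg.2 hc) (div_self_le_one _)

theorem erlang_near_full_limit (β : ℝ) (hβ : 1 < β) (σ : ℕ) :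
    Tendsto (fun K : ℕ =>
        (∑ ℓ ∈ Finset.Icc (K - σ) K, (β * K) ^ ℓ / (Nat.factorial ℓ : ℝ)) /
          (∑ k ∈ Finset.range (K + 1), (β * K) ^ k / (Nat.factorial k : ℝ)))
      atTop (nhds (1 - 1 / β ^ (σ + 1))) := by
  have hβ0 : 0 < β := one_pos.trans hβ
  have hq : β⁻¹ < 1 := inv_lt_one_of_one_lt₀ hβ
  have hnum : Tendsto (fun K : ℕ => ∑ j ∈ range (σ + 1), (K.descFactorial j : ℝ) / (β * K) ^ j)
      atTop (𝓝 (∑ j ∈ range (σ + 1), β⁻¹ ^ j)) :=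
    tendsto_finsetSum _ fun j _ => tendsto_descFactorial_div_mul_pow β j
  have hden : Tendsto (fun K : ℕ => ∑' j, (K.descFactorial j : ℝ) / (β * K) ^ j)
      atTop (𝓝 (1 - β⁻¹)⁻¹) := by
    rw [← tsum_geometric_of_lt_one (by positivity) hq]
    refine tendsto_tsum_of_dominated_convergence (summable_geometric_of_lt_one (by positivity) hq)
      (tendsto_descFactorial_div_mul_pow β) (Eventually.of_forall fun K j => ?_)
    rw [Real.norm_of_nonneg (by positivity)]
    exact descFactorial_div_mul_pow_le hβ0.le K j
  have hlim : (∑ j ∈ range (σ + 1), β⁻¹ ^ j) / (1 - β⁻¹)⁻¹ = 1 - 1 / β ^ (σ + 1) := by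
    rw [div_inv_eq_mul, mul_comm, mul_neg_geom_sum, one_div, inv_pow]
  rw [← hlim]
  refine (hnum.div hden (inv_ne_zero (sub_pos.2 hq).ne')).congr' ?_
  filter_upwards [eventually_ge_atTop (max σ 1)] with K hK
  have hx : β * K ≠ 0 := by
    have : (1 : ℝ) ≤ K := by exact_mod_cast le_of_max_le_right hK
    positivity
  rw [Pi.div_apply, sum_Icc_pow_div_factorial hx (le_of_max_le_left hK),
    sum_range_pow_div_factorial hx, mul_div_mul_left _ _ (by positivity)]
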